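/- Let 0 < r < ∞ be fixed. Then there exists exactly one number κ_r ∈ (0,∞) such that lim_{k→∞} (1/k) log Σ_{σ∈Ω_k} (μ_h(J_σ) ‖φ'_σ‖^r)^{κ_r/(r+κ_r)} = 0. -/
import Mathlib


open MeasureTheory Filter Metric

noncomputable section

/-- A cookie-cutter system on `J = [0,1]`. -/
structure CookieCutter where
  N : ℕ
  hN : 2 ≤ N
  Jsub : Fin N → Set ℝ
  f : ℝ → ℝ
  φ : Fin N → ℝ → ℝ
  c : ℝ
  γ : ℝ
  b : ℝ
  B : ℝ
  hJsub_sub : ∀ j, Jsub j ⊆ Set.Icc 0 1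
  hJsub_interval : ∀ j, ∃ u v : ℝ, u ≤ v ∧ Jsub j = Set.Icc u v
  hJsub_disj : ∀ i j, i ≠ j → Disjoint (Jsub i) (Jsub j)
  hbij : ∀ j, Set.BijOn f (Jsub j) (Set.Icc 0 1)
  hφ_maps : ∀ j, ∀ x ∈ Set.Icc (0:ℝ) 1, φ j x ∈ Jsub j
  hφ_rinv : ∀ j, ∀ x ∈ Set.Icc (0:ℝ) 1, f (φ j x) = x
  hφ_linv : ∀ j, ∀ x ∈ Jsub j, φ j (f x) = x
  hfdiff : ∀ j, ∀ x ∈ Jsub j, DifferentiableAt ℝ f x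
  hφdiff : ∀ j, ∀ x ∈ Set.Icc (0:ℝ) 1, DifferentiableAt ℝ (φ j) x
  hc : 0 < c
  hγ : γ ∈ Set.Ioc (0:ℝ) 1
  hHolder : ∀ j, ∀ x ∈ Jsub j, ∀ y ∈ Jsub j, |deriv f x - deriv f y| ≤ c * |x - y| ^ γ
  hb : IsGLB ((fun x => |deriv f x|) '' ⋃ j, Jsub j) b
  hB : IsLUB ((fun x => |deriv f x|) '' ⋃ j, Jsub j) B
  hb1 : 1 < b

namespace CookieCutter

variable (cc : CookieCutter)

/-- `φ_σ = φ_{σ_1} ∘ ⋯ ∘ φ_{σ_n}` for a word `σ`. -/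
def wordMap : List (Fin cc.N) → ℝ → ℝ
  | [] => id
  | j :: rest => cc.φ j ∘ wordMap rest

/-- The basic interval `J_σ = φ_σ(J)`. -/
def Jc (σ : List (Fin cc.N)) : Set ℝ := cc.wordMap σ '' Set.Icc 0 1

/-- The diameter `|J_σ|`. -/
def diamJ (σ : List (Fin cc.N)) : ℝ := Metric.diam (cc.Jc σ)

/-- `‖φ'_σ‖ = sup_{x ∈ J} |φ'_σ(x)|`. -/
def φnorm (σ : List (Fin cc.N)) : ℝ :=
  sSup ((fun x => |deriv (cc.wordMap σ) x|) '' Set.Icc 0 1)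

/-- The distortion constant `ξ = exp (c / (b^γ − 1))`. -/
def xi : ℝ := Real.exp (cc.c / (cc.b ^ cc.γ - 1))

/-- The cookie-cutter set `E = ⋂_{n ≥ 1} ⋃_{σ ∈ Ω_n} J_σ`. -/
def E : Set ℝ := ⋂ (n : ℕ) (_ : 1 ≤ n), ⋃ σ : Fin n → Fin cc.N, cc.Jc (List.ofFn σ)

/-- `η = ξ^{9h}`. -/
def eta (h : ℝ) : ℝ := cc.xi ^ ((9:ℝ) * h)

/-- `L = η³ ξ^{3h}`. -/
def Lconst (h : ℝ) : ℝ := (cc.eta h) ^ 3 * cc.xi ^ ((3:ℝ) * h)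

/-- A Gibbs-like measure for the cookie-cutter system: a Borel probability measure
supported on `E` with `η⁻¹|J_σ|^h ≤ μ(J_σ) ≤ η|J_σ|^h` for every word `σ`. -/
def IsGibbsLike (μ : Measure ℝ) (h : ℝ) : Prop :=
  IsProbabilityMeasure μ ∧ μ (cc.Eᶜ) = 0 ∧
    ∀ σ : List (Fin cc.N), σ ≠ [] →
      (cc.eta h)⁻¹ * cc.diamJ σ ^ h ≤ (μ (cc.Jc σ)).toReal ∧
      (μ (cc.Jc σ)).toReal ≤ cc.eta h * cc.diamJ σ ^ h

/-- A finite maximal antichain in `Ω`. -/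
def IsFMA (Γ : Finset (List (Fin cc.N))) : Prop :=
  (∀ σ ∈ Γ, σ ≠ []) ∧
  (∀ ω : ℕ → Fin cc.N, ∃ k : ℕ, 1 ≤ k ∧ (List.ofFn fun i : Fin k => ω i) ∈ Γ) ∧
  ∀ σ ∈ Γ, ∀ τ ∈ Γ, σ <+: τ → σ = τ

end CookieCutter


namespace CookieCutter

open Set

variable {cc : CookieCutter}

lemma bpos : (0:ℝ) < cc.b := lt_trans one_pos cc.hb1

lemma Jsub_nonempty (j : Fin cc.N) : (cc.Jsub j).Nonempty := by
  obtain ⟨u, v, huv, h⟩ := cc.hJsub_interval j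
  exact h ▸ Set.nonempty_Icc.2 huv

lemma bB : cc.b ≤ cc.B := by
  obtain ⟨x, hx⟩ := Jsub_nonempty (⟨0, by have := cc.hN; omega⟩ : Fin cc.N)
  have hmem : |deriv cc.f x| ∈ ((fun x => |deriv cc.f x|) '' ⋃ j, cc.Jsub j) :=
    ⟨x, Set.mem_iUnion.2 ⟨_, hx⟩, rfl⟩
  exact le_trans (cc.hb.1 hmem) (cc.hB.1 hmem)

lemma Bpos : (0:ℝ) < cc.B := lt_of_lt_of_le bpos bB

lemma fderiv_bounds (j : Fin cc.N) {u : ℝ} (hu : u ∈ cc.Jsub j) :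
    cc.b ≤ |deriv cc.f u| ∧ |deriv cc.f u| ≤ cc.B := by
  have hmem : |deriv cc.f u| ∈ ((fun x => |deriv cc.f x|) '' ⋃ j, cc.Jsub j) :=
    ⟨u, Set.mem_iUnion.2 ⟨j, hu⟩, rfl⟩
  exact ⟨cc.hb.1 hmem, cc.hB.1 hmem⟩

lemma phi_deriv_eq (j : Fin cc.N) {x : ℝ} (hx : x ∈ Set.Icc (0:ℝ) 1) :
    deriv cc.f (cc.φ j x) * deriv (cc.φ j) x = 1 := by
  have hu : cc.φ j x ∈ cc.Jsub j := cc.hφ_maps j x hx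
  have h1 : HasDerivAt (cc.f ∘ cc.φ j) (deriv cc.f (cc.φ j x) * deriv (cc.φ j) x) x :=
    (cc.hfdiff j _ hu).hasDerivAt.comp x (cc.hφdiff j x hx).hasDerivAt
  have h2 : HasDerivWithinAt id (deriv cc.f (cc.φ j x) * deriv (cc.φ j) x)
      (Set.Icc (0:ℝ) 1) x := by
    refine h1.hasDerivWithinAt.congr (fun y hy => ?_) ?_
    · exact (cc.hφ_rinv j y hy).symm
    · exact (cc.hφ_rinv j x hx).symm
  have h3 : HasDerivWithinAt id 1 (Set.Icc (0:ℝ) 1) x := (hasDerivAt_id x).hasDerivWithinAt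
  exact (uniqueDiffOn_Icc one_pos x hx).eq_deriv _ h2 h3

lemma phi_deriv_abs (j : Fin cc.N) {x : ℝ} (hx : x ∈ Set.Icc (0:ℝ) 1) :
    |deriv (cc.φ j) x| = |deriv cc.f (cc.φ j x)|⁻¹ := by
  have h := phi_deriv_eq j hx
  have hne : deriv cc.f (cc.φ j x) ≠ 0 := by
    intro h0; rw [h0, zero_mul] at h; exact one_ne_zero h.symm
  field_simp
  rw [← abs_mul, mul_comm, h, abs_one]

lemma phi_deriv_abs_bounds (j : Fin cc.N) {x : ℝ} (hx : x ∈ Set.Icc (0:ℝ) 1) :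
    cc.B⁻¹ ≤ |deriv (cc.φ j) x| ∧ |deriv (cc.φ j) x| ≤ cc.b⁻¹ := by
  rw [phi_deriv_abs j hx]
  obtain ⟨h1, h2⟩ := fderiv_bounds j (cc.hφ_maps j x hx)
  constructor
  · exact inv_anti₀ (lt_of_lt_of_le bpos h1) h2
  · exact inv_anti₀ bpos h1


lemma wordMap_maps (σ : List (Fin cc.N)) : Set.MapsTo (cc.wordMap σ) (Set.Icc 0 1) (Set.Icc 0 1) := by
  induction σ with
  | nil => exact fun x hx => hx
  | cons j rest ih =>
    intro x hx
    exact cc.hJsub_sub j (cc.hφ_maps j _ (ih hx))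

lemma wordMap_diff (σ : List (Fin cc.N)) {x : ℝ} (hx : x ∈ Set.Icc (0:ℝ) 1) :
    DifferentiableAt ℝ (cc.wordMap σ) x := by
  induction σ with
  | nil => exact differentiableAt_id
  | cons j rest ih =>
    exact (cc.hφdiff j _ (wordMap_maps rest hx)).comp x ih

lemma wordMap_deriv_cons (j : Fin cc.N) (rest : List (Fin cc.N)) {x : ℝ}
    (hx : x ∈ Set.Icc (0:ℝ) 1) :
    deriv (cc.wordMap (j :: rest)) x
      = deriv (cc.φ j) (cc.wordMap rest x) * deriv (cc.wordMap rest) x := by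
  exact ((cc.hφdiff j _ (wordMap_maps rest hx)).hasDerivAt.comp x
    (wordMap_diff rest hx).hasDerivAt).deriv

lemma wordMap_deriv_bounds (σ : List (Fin cc.N)) {x : ℝ} (hx : x ∈ Set.Icc (0:ℝ) 1) :
    cc.B⁻¹ ^ σ.length ≤ |deriv (cc.wordMap σ) x| ∧
      |deriv (cc.wordMap σ) x| ≤ cc.b⁻¹ ^ σ.length := by
  induction σ with
  | nil =>
    simp [wordMap]
  | cons j rest ih =>
    rw [wordMap_deriv_cons j rest hx, abs_mul]
    obtain ⟨h1, h2⟩ := phi_deriv_abs_bounds j (wordMap_maps rest hx)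
    constructor
    · rw [List.length_cons, pow_succ, mul_comm (cc.B⁻¹ ^ rest.length)]
      exact mul_le_mul h1 ih.1 (pow_nonneg (inv_nonneg.2 Bpos.le) _) (abs_nonneg _)
    · rw [List.length_cons, pow_succ, mul_comm (cc.b⁻¹ ^ rest.length)]
      exact mul_le_mul h2 ih.2 (abs_nonneg _) (inv_nonneg.2 bpos.le)

lemma wordMap_lip (σ : List (Fin cc.N)) {x y : ℝ} (hx : x ∈ Set.Icc (0:ℝ) 1)
    (hy : y ∈ Set.Icc (0:ℝ) 1) :
    |cc.wordMap σ x - cc.wordMap σ y| ≤ cc.b⁻¹ ^ σ.length * |x - y| := by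
  have := Convex.norm_image_sub_le_of_norm_deriv_le
    (f := cc.wordMap σ) (s := Set.Icc (0:ℝ) 1) (C := cc.b⁻¹ ^ σ.length)
    (fun z hz => wordMap_diff σ hz) (fun z hz => (wordMap_deriv_bounds σ hz).2)
    (convex_Icc 0 1) hy hx
  simpa [Real.norm_eq_abs] using this


lemma abs_sub_le_one {x y : ℝ} (hx : x ∈ Set.Icc (0:ℝ) 1) (hy : y ∈ Set.Icc (0:ℝ) 1) :
    |x - y| ≤ 1 := by
  rw [abs_sub_le_iff]; constructor <;> [linarith [hx.1, hx.2, hy.1, hy.2];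
    linarith [hx.1, hx.2, hy.1, hy.2]]

lemma phi_single_distortion (j : Fin cc.N) {u v : ℝ} (hu : u ∈ Set.Icc (0:ℝ) 1)
    (hv : v ∈ Set.Icc (0:ℝ) 1) :
    |deriv (cc.φ j) u| ≤ Real.exp (cc.c / cc.b * |u - v| ^ cc.γ) * |deriv (cc.φ j) v| := by
  set a := |deriv cc.f (cc.φ j u)| with ha
  set a' := |deriv cc.f (cc.φ j v)| with ha'
  have hab : cc.b ≤ a := (fderiv_bounds j (cc.hφ_maps j u hu)).1
  have hab' : cc.b ≤ a' := (fderiv_bounds j (cc.hφ_maps j v hv)).1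
  have hapos : 0 < a := lt_of_lt_of_le bpos hab
  have hapos' : 0 < a' := lt_of_lt_of_le bpos hab'
  have hφlip : |cc.φ j u - cc.φ j v| ≤ |u - v| := by
    have h1 := wordMap_lip (cc := cc) [j] hu hv
    simp only [wordMap, Function.comp, id] at h1
    calc |cc.φ j u - cc.φ j v| ≤ cc.b⁻¹ ^ ([j] : List (Fin cc.N)).length * |u - v| := h1
      _ ≤ 1 * |u - v| := by
          apply mul_le_mul_of_nonneg_right _ (abs_nonneg _)
          simp only [List.length_singleton, pow_one]
          exact inv_le_one_of_one_le₀ cc.hb1.le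
      _ = |u - v| := one_mul _
  have hhol : a' ≤ a + cc.c * |u - v| ^ cc.γ := by
    have h2 := cc.hHolder j _ (cc.hφ_maps j v hv) _ (cc.hφ_maps j u hu)
    have h3 : a' - a ≤ cc.c * |cc.φ j v - cc.φ j u| ^ cc.γ :=
      le_trans (abs_sub_abs_le_abs_sub _ _) h2
    have h4 : |cc.φ j v - cc.φ j u| ^ cc.γ ≤ |u - v| ^ cc.γ := by
      apply Real.rpow_le_rpow (abs_nonneg _) _ cc.hγ.1.le
      rw [abs_sub_comm]; exact hφlip
    nlinarith [cc.hc.le, mul_le_mul_of_nonneg_left h4 cc.hc.le]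
  set e := cc.c / cc.b * |u - v| ^ cc.γ with he
  have he0 : 0 ≤ e := by
    apply mul_nonneg (div_nonneg cc.hc.le bpos.le) (Real.rpow_nonneg (abs_nonneg _) _)
  have hkey : a' ≤ Real.exp e * a := by
    have h5 : cc.c * |u - v| ^ cc.γ ≤ e * a := by
      rw [he]
      have : cc.c / cc.b * |u - v| ^ cc.γ * cc.b ≤ cc.c / cc.b * |u - v| ^ cc.γ * a :=
        mul_le_mul_of_nonneg_left hab he0
      calc cc.c * |u - v| ^ cc.γ = cc.c / cc.b * |u - v| ^ cc.γ * cc.b := by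
            rw [div_mul_eq_mul_div, div_mul_eq_mul_div, mul_div_assoc,
              div_self (ne_of_gt bpos), mul_one]
        _ ≤ _ := this
    have h6 : a + e * a = (1 + e) * a := by ring
    have h7 : (1 + e) * a ≤ Real.exp e * a := by
      apply mul_le_mul_of_nonneg_right _ hapos.le
      linarith [Real.add_one_le_exp e]
    linarith
  rw [phi_deriv_abs j hu, phi_deriv_abs j hv, ← ha, ← ha']
  have h2 : a⁻¹ * a' ≤ Real.exp e := by
    rw [inv_mul_le_iff₀ hapos]
    calc a' ≤ Real.exp e * a := hkey
      _ = a * Real.exp e := mul_comm _ _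
  calc a⁻¹ = a⁻¹ * a' * a'⁻¹ := by field_simp
    _ ≤ Real.exp e * a'⁻¹ := mul_le_mul_of_nonneg_right h2 (inv_nonneg.2 hapos'.le)

lemma pow_rpow_helper (m : ℕ) : ((cc.b⁻¹ ^ m : ℝ)) ^ cc.γ = ((cc.b ^ cc.γ)⁻¹) ^ m := by
  rw [← Real.rpow_natCast cc.b⁻¹ m, ← Real.rpow_mul (inv_nonneg.2 bpos.le), mul_comm,
    Real.rpow_mul (inv_nonneg.2 bpos.le), Real.inv_rpow bpos.le, Real.rpow_natCast]

lemma distortion_aux (σ : List (Fin cc.N)) {x y : ℝ} (hx : x ∈ Set.Icc (0:ℝ) 1)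
    (hy : y ∈ Set.Icc (0:ℝ) 1) :
    |deriv (cc.wordMap σ) x| ≤
      Real.exp (cc.c / cc.b * ∑ i ∈ Finset.range σ.length, ((cc.b ^ cc.γ)⁻¹) ^ i) *
        |deriv (cc.wordMap σ) y| := by
  induction σ with
  | nil => simp [wordMap]
  | cons j rest ih =>
    have hu : cc.wordMap rest x ∈ Set.Icc (0:ℝ) 1 := wordMap_maps rest hx
    have hv : cc.wordMap rest y ∈ Set.Icc (0:ℝ) 1 := wordMap_maps rest hy
    rw [wordMap_deriv_cons j rest hx, wordMap_deriv_cons j rest hy, abs_mul, abs_mul]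
    have hsingle := phi_single_distortion j hu hv
    have hdist : |cc.wordMap rest x - cc.wordMap rest y| ^ cc.γ ≤
        ((cc.b ^ cc.γ)⁻¹) ^ rest.length := by
      rw [← pow_rpow_helper]
      apply Real.rpow_le_rpow (abs_nonneg _) _ cc.hγ.1.le
      calc |cc.wordMap rest x - cc.wordMap rest y| ≤ cc.b⁻¹ ^ rest.length * |x - y| :=
            wordMap_lip rest hx hy
        _ ≤ cc.b⁻¹ ^ rest.length * 1 :=
            mul_le_mul_of_nonneg_left (abs_sub_le_one hx hy)
              (pow_nonneg (inv_nonneg.2 bpos.le) _)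
        _ = cc.b⁻¹ ^ rest.length := mul_one _
    have hsingle2 : |deriv (cc.φ j) (cc.wordMap rest x)| ≤
        Real.exp (cc.c / cc.b * ((cc.b ^ cc.γ)⁻¹) ^ rest.length) *
          |deriv (cc.φ j) (cc.wordMap rest y)| := by
      refine le_trans hsingle (mul_le_mul_of_nonneg_right ?_ (abs_nonneg _))
      apply Real.exp_le_exp.2
      exact mul_le_mul_of_nonneg_left hdist (div_nonneg cc.hc.le bpos.le)
    calc |deriv (cc.φ j) (cc.wordMap rest x)| * |deriv (cc.wordMap rest) x|
        ≤ (Real.exp (cc.c / cc.b * ((cc.b ^ cc.γ)⁻¹) ^ rest.length) *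
            |deriv (cc.φ j) (cc.wordMap rest y)|) *
          (Real.exp (cc.c / cc.b * ∑ i ∈ Finset.range rest.length, ((cc.b ^ cc.γ)⁻¹) ^ i) *
            |deriv (cc.wordMap rest) y|) := by
          exact mul_le_mul hsingle2 ih (abs_nonneg _)
            (mul_nonneg (Real.exp_nonneg _) (abs_nonneg _))
      _ = Real.exp (cc.c / cc.b *
            ∑ i ∈ Finset.range (j :: rest).length, ((cc.b ^ cc.γ)⁻¹) ^ i) *
          (|deriv (cc.φ j) (cc.wordMap rest y)| * |deriv (cc.wordMap rest) y|) := by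
          rw [List.length_cons, Finset.sum_range_succ, mul_add, Real.exp_add]
          ring


lemma bγ_gt_one : 1 < cc.b ^ cc.γ :=
  (Real.one_lt_rpow_iff_of_pos bpos).2 (Or.inl ⟨cc.hb1, cc.hγ.1⟩)

lemma xi_ge_one : 1 ≤ cc.xi := by
  unfold xi
  have h := bγ_gt_one (cc := cc)
  exact Real.one_le_exp (div_nonneg cc.hc.le (by linarith))

lemma xi_pos : 0 < cc.xi := Real.exp_pos _

lemma distortion (σ : List (Fin cc.N)) {x y : ℝ} (hx : x ∈ Set.Icc (0:ℝ) 1)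
    (hy : y ∈ Set.Icc (0:ℝ) 1) :
    |deriv (cc.wordMap σ) x| ≤ cc.xi * |deriv (cc.wordMap σ) y| := by
  refine le_trans (distortion_aux σ hx hy)
    (mul_le_mul_of_nonneg_right ?_ (abs_nonneg _))
  unfold xi
  apply Real.exp_le_exp.2
  set t := (cc.b ^ cc.γ)⁻¹ with htdef
  have hbγ := bγ_gt_one (cc := cc)
  have ht0 : 0 ≤ t := inv_nonneg.2 (by linarith)
  have ht1 : t < 1 := inv_lt_one_of_one_lt₀ hbγ
  have hne : t ≠ 1 := ne_of_lt ht1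
  have hsum : ∑ i ∈ Finset.range σ.length, t ^ i ≤ 1 / (1 - t) := by
    rw [geom_sum_eq hne]
    rw [← neg_div_neg_eq]
    simp only [neg_sub]
    have hp : 1 - t ^ σ.length ≤ 1 := by nlinarith [pow_nonneg ht0 σ.length]
    exact (div_le_div_iff_of_pos_right (by linarith)).2 hp
  calc cc.c / cc.b * ∑ i ∈ Finset.range σ.length, t ^ i
      ≤ cc.c / cc.b * (1 / (1 - t)) :=
        mul_le_mul_of_nonneg_left hsum (div_nonneg cc.hc.le bpos.le)
    _ = cc.c / (cc.b * (1 - t)) := by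
        rw [div_mul_div_comm, mul_one]
    _ ≤ cc.c / (cc.b ^ cc.γ - 1) := by
        apply div_le_div_of_nonneg_left cc.hc.le (by linarith)
        have hb1γ : (1:ℝ) ≤ cc.b ^ (1 - cc.γ) := Real.one_le_rpow cc.hb1.le (by linarith [cc.hγ.2])
        have hbt : cc.b * t = cc.b ^ (1 - cc.γ) := by
          rw [htdef, Real.rpow_sub bpos, Real.rpow_one, div_eq_mul_inv]
        have hmul : cc.b ^ (1 - cc.γ) * cc.b ^ cc.γ = cc.b := by
          rw [← Real.rpow_add bpos]; norm_num
        have hfact : (0:ℝ) ≤ (cc.b ^ (1 - cc.γ) - 1) * (cc.b ^ cc.γ - 1) :=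
          mul_nonneg (by linarith) (by linarith)
        nlinarith [hbt, hmul, hfact]


lemma φnorm_le (σ : List (Fin cc.N)) : cc.φnorm σ ≤ cc.b⁻¹ ^ σ.length := by
  apply Real.sSup_le
  · rintro v ⟨x, hx, rfl⟩
    exact (wordMap_deriv_bounds σ hx).2
  · exact pow_nonneg (inv_nonneg.2 bpos.le) _

lemma le_φnorm (σ : List (Fin cc.N)) : cc.B⁻¹ ^ σ.length ≤ cc.φnorm σ := by
  have h0 : (0:ℝ) ∈ Set.Icc (0:ℝ) 1 := ⟨le_refl 0, zero_le_one⟩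
  have hbdd : BddAbove ((fun x => |deriv (cc.wordMap σ) x|) '' Set.Icc 0 1) := by
    refine ⟨cc.b⁻¹ ^ σ.length, ?_⟩
    rintro v ⟨x, hx, rfl⟩
    exact (wordMap_deriv_bounds σ hx).2
  exact le_trans (wordMap_deriv_bounds σ h0).1 (le_csSup hbdd ⟨0, h0, rfl⟩)

lemma φnorm_pos (σ : List (Fin cc.N)) : 0 < cc.φnorm σ :=
  lt_of_lt_of_le (pow_pos (inv_pos.2 Bpos) _) (le_φnorm σ)

lemma abs_deriv_le_φnorm (σ : List (Fin cc.N)) {x : ℝ} (hx : x ∈ Set.Icc (0:ℝ) 1) :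
    |deriv (cc.wordMap σ) x| ≤ cc.φnorm σ := by
  have hbdd : BddAbove ((fun x => |deriv (cc.wordMap σ) x|) '' Set.Icc 0 1) := by
    refine ⟨cc.b⁻¹ ^ σ.length, ?_⟩
    rintro v ⟨z, hz, rfl⟩
    exact (wordMap_deriv_bounds σ hz).2
  exact le_csSup hbdd ⟨x, hx, rfl⟩

lemma φnorm_le_xi_mul (σ : List (Fin cc.N)) {y : ℝ} (hy : y ∈ Set.Icc (0:ℝ) 1) :
    cc.φnorm σ ≤ cc.xi * |deriv (cc.wordMap σ) y| := by
  apply Real.sSup_le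
  · rintro v ⟨x, hx, rfl⟩
    exact distortion σ hx hy
  · exact mul_nonneg xi_pos.le (abs_nonneg _)

lemma diamJ_le_φnorm (σ : List (Fin cc.N)) : cc.diamJ σ ≤ cc.φnorm σ := by
  apply Metric.diam_le_of_forall_dist_le (φnorm_pos σ).le
  rintro p ⟨x, hx, rfl⟩ q ⟨y, hy, rfl⟩
  have h := Convex.norm_image_sub_le_of_norm_deriv_le
    (f := cc.wordMap σ) (s := Set.Icc (0:ℝ) 1) (C := cc.φnorm σ)
    (fun z hz => wordMap_diff σ hz) (fun z hz => abs_deriv_le_φnorm σ hz)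
    (convex_Icc 0 1) hy hx
  rw [Real.dist_eq]
  calc |cc.wordMap σ x - cc.wordMap σ y| ≤ cc.φnorm σ * |x - y| := by
        simpa [Real.norm_eq_abs] using h
    _ ≤ cc.φnorm σ * 1 := mul_le_mul_of_nonneg_left (abs_sub_le_one hx hy) (φnorm_pos σ).le
    _ = cc.φnorm σ := mul_one _

lemma wordMap_continuousOn (σ : List (Fin cc.N)) :
    ContinuousOn (cc.wordMap σ) (Set.Icc 0 1) :=
  fun x hx => (wordMap_diff σ hx).continuousAt.continuousWithinAt

lemma isBounded_Jc (σ : List (Fin cc.N)) : Bornology.IsBounded (cc.Jc σ) :=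
  (isCompact_Icc.image_of_continuousOn (wordMap_continuousOn σ)).isBounded

lemma φnorm_le_xi_diam (σ : List (Fin cc.N)) : cc.φnorm σ ≤ cc.xi * cc.diamJ σ := by
  obtain ⟨z, hz, hslope⟩ := exists_deriv_eq_slope (cc.wordMap σ) one_pos
    (wordMap_continuousOn σ) (fun x hx => (wordMap_diff σ (Ioo_subset_Icc_self hx)).differentiableWithinAt)
  have hzI : z ∈ Set.Icc (0:ℝ) 1 := Ioo_subset_Icc_self hz
  have h1 : cc.φnorm σ ≤ cc.xi * |deriv (cc.wordMap σ) z| := φnorm_le_xi_mul σ hzI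
  have h2 : |deriv (cc.wordMap σ) z| ≤ cc.diamJ σ := by
    rw [hslope]
    simp only [sub_zero, div_one]
    have := Metric.dist_le_diam_of_mem (isBounded_Jc σ)
      (⟨1, ⟨zero_le_one, le_refl 1⟩, rfl⟩ : cc.wordMap σ 1 ∈ cc.Jc σ)
      (⟨0, ⟨le_refl 0, zero_le_one⟩, rfl⟩ : cc.wordMap σ 0 ∈ cc.Jc σ)
    rwa [Real.dist_eq] at this
  calc cc.φnorm σ ≤ cc.xi * |deriv (cc.wordMap σ) z| := h1
    _ ≤ cc.xi * cc.diamJ σ := mul_le_mul_of_nonneg_left h2 xi_pos.le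

lemma diamJ_pos (σ : List (Fin cc.N)) : 0 < cc.diamJ σ := by
  have h := φnorm_le_xi_diam σ
  have := φnorm_pos σ
  nlinarith [xi_pos (cc := cc)]


lemma eta_pos (h : ℝ) : 0 < cc.eta h := Real.rpow_pos_of_pos xi_pos _

/-- Sandwich for the Gibbs measure in terms of `φnorm`. -/
lemma gibbs_sandwich {μ : Measure ℝ} {h : ℝ} (hμ : cc.IsGibbsLike μ h) (hh0 : 0 < h)
    {σ : List (Fin cc.N)} (hσ : σ ≠ []) :
    (cc.eta h)⁻¹ * (cc.xi⁻¹) ^ h * cc.φnorm σ ^ h ≤ (μ (cc.Jc σ)).toReal ∧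
      (μ (cc.Jc σ)).toReal ≤ cc.eta h * cc.φnorm σ ^ h := by
  obtain ⟨h1, h2⟩ := hμ.2.2 σ hσ
  have hp := φnorm_pos σ
  have hd := diamJ_pos σ
  have hδu : cc.diamJ σ ≤ cc.φnorm σ := diamJ_le_φnorm σ
  have hδl : cc.xi⁻¹ * cc.φnorm σ ≤ cc.diamJ σ := by
    have := φnorm_le_xi_diam σ
    rw [inv_mul_le_iff₀ xi_pos]
    exact this
  constructor
  · refine le_trans ?_ h1
    rw [mul_assoc, ← Real.mul_rpow (inv_nonneg.2 xi_pos.le) hp.le]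
    exact mul_le_mul_of_nonneg_left
      (Real.rpow_le_rpow (mul_nonneg (inv_nonneg.2 xi_pos.le) hp.le) hδl hh0.le)
      (inv_nonneg.2 (eta_pos h).le)
  · refine le_trans h2 ?_
    exact mul_le_mul_of_nonneg_left (Real.rpow_le_rpow hd.le hδu hh0.le) (eta_pos h).le

variable (cc) in
/-- The partition function `T n t = ∑_{|σ|=n} ‖φ'_σ‖^t`. -/
def Tsum (n : ℕ) (t : ℝ) : ℝ := ∑ σ : Fin n → Fin cc.N, cc.φnorm (List.ofFn σ) ^ t

lemma finNonempty : Nonempty (Fin cc.N) := ⟨⟨0, by have := cc.hN; omega⟩⟩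

lemma Tsum_pos (n : ℕ) (t : ℝ) : 0 < cc.Tsum n t := by
  haveI := finNonempty (cc := cc)
  haveI : Nonempty (Fin n → Fin cc.N) := Pi.instNonempty
  exact Finset.sum_pos (fun σ _ => Real.rpow_pos_of_pos (φnorm_pos _) _) Finset.univ_nonempty

/-- The key limit: the weighted sums converge to `Q ((h+r)s)`. -/
lemma tendsto_weighted (Q : ℝ → ℝ)
    (hQ : ∀ t : ℝ, Filter.Tendsto
      (fun k : ℕ => (1 / (k : ℝ)) * Real.log (cc.Tsum k t)) Filter.atTop (nhds (Q t)))
    {h r sx : ℝ} (hh0 : 0 < h) (hr : 0 < r) (hs : 0 < sx)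
    {μ : Measure ℝ} (hμ : cc.IsGibbsLike μ h) :
    Filter.Tendsto
      (fun n : ℕ => (1 / (n : ℝ)) * Real.log
        (∑ σ : Fin n → Fin cc.N,
          ((μ (cc.Jc (List.ofFn σ))).toReal * cc.φnorm (List.ofFn σ) ^ r) ^ sx))
      Filter.atTop (nhds (Q ((h + r) * sx))) := by
  set K1 : ℝ := (cc.eta h)⁻¹ * (cc.xi⁻¹) ^ h with hK1
  set K2 : ℝ := cc.eta h with hK2
  have hK1pos : 0 < K1 := by
    have h1 := eta_pos (cc := cc) h
    have h2 : (0:ℝ) < (cc.xi⁻¹ : ℝ) ^ h := Real.rpow_pos_of_pos (inv_pos.2 xi_pos) h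
    exact mul_pos (inv_pos.2 h1) h2
  have hK2pos : 0 < K2 := eta_pos h
  set S : ℕ → ℝ := fun n => ∑ σ : Fin n → Fin cc.N,
    ((μ (cc.Jc (List.ofFn σ))).toReal * cc.φnorm (List.ofFn σ) ^ r) ^ sx with hS
  -- termwise sandwich
  have hterm : ∀ n : ℕ, 1 ≤ n → ∀ σ : Fin n → Fin cc.N,
      K1 ^ sx * cc.φnorm (List.ofFn σ) ^ ((h + r) * sx) ≤
        ((μ (cc.Jc (List.ofFn σ))).toReal * cc.φnorm (List.ofFn σ) ^ r) ^ sx ∧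
      ((μ (cc.Jc (List.ofFn σ))).toReal * cc.φnorm (List.ofFn σ) ^ r) ^ sx ≤
        K2 ^ sx * cc.φnorm (List.ofFn σ) ^ ((h + r) * sx) := by
    intro n hn σ
    have hne : List.ofFn σ ≠ [] := by
      rw [ne_eq, List.ofFn_eq_nil_iff]; omega
    obtain ⟨hg1, hg2⟩ := gibbs_sandwich hμ hh0 hne
    set p := cc.φnorm (List.ofFn σ) with hpdef
    have hppos : 0 < p := φnorm_pos _
    have hsplit : p ^ h * p ^ r = p ^ (h + r) := (Real.rpow_add hppos h r).symm
    have hlow : K1 * p ^ (h + r) ≤ (μ (cc.Jc (List.ofFn σ))).toReal * p ^ r := by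
      rw [← hsplit, ← mul_assoc]
      exact mul_le_mul_of_nonneg_right hg1 (Real.rpow_pos_of_pos hppos r).le
    have hhigh : (μ (cc.Jc (List.ofFn σ))).toReal * p ^ r ≤ K2 * p ^ (h + r) := by
      rw [← hsplit, ← mul_assoc]
      exact mul_le_mul_of_nonneg_right hg2 (Real.rpow_pos_of_pos hppos r).le
    have e1 : (K1 * p ^ (h + r)) ^ sx = K1 ^ sx * p ^ ((h + r) * sx) := by
      rw [Real.mul_rpow hK1pos.le (Real.rpow_pos_of_pos hppos _).le,
        Real.rpow_mul hppos.le]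
    have e2 : (K2 * p ^ (h + r)) ^ sx = K2 ^ sx * p ^ ((h + r) * sx) := by
      rw [Real.mul_rpow hK2pos.le (Real.rpow_pos_of_pos hppos _).le,
        Real.rpow_mul hppos.le]
    constructor
    · rw [← e1]
      exact Real.rpow_le_rpow (by positivity) hlow hs.le
    · rw [← e2]
      exact Real.rpow_le_rpow (le_trans (by positivity) hlow) hhigh hs.le
  -- sum sandwich
  have hsum : ∀ n : ℕ, 1 ≤ n →
      K1 ^ sx * cc.Tsum n ((h + r) * sx) ≤ S n ∧
        S n ≤ K2 ^ sx * cc.Tsum n ((h + r) * sx) := by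
    intro n hn
    constructor
    · rw [Tsum, Finset.mul_sum]
      exact Finset.sum_le_sum (fun σ _ => (hterm n hn σ).1)
    · rw [Tsum, Finset.mul_sum]
      exact Finset.sum_le_sum (fun σ _ => (hterm n hn σ).2)
  have hSpos : ∀ n : ℕ, 1 ≤ n → 0 < S n := fun n hn =>
    lt_of_lt_of_le (mul_pos (Real.rpow_pos_of_pos hK1pos sx) (Tsum_pos n _)) (hsum n hn).1
  -- log sandwich and squeeze
  have hlog : ∀ n : ℕ, 1 ≤ n →
      (1 / (n:ℝ)) * Real.log (K1 ^ sx) + (1 / (n:ℝ)) * Real.log (cc.Tsum n ((h + r) * sx)) ≤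
        (1 / (n:ℝ)) * Real.log (S n) ∧
      (1 / (n:ℝ)) * Real.log (S n) ≤
        (1 / (n:ℝ)) * Real.log (K2 ^ sx) + (1 / (n:ℝ)) * Real.log (cc.Tsum n ((h + r) * sx)) := by
    intro n hn
    have hTpos := Tsum_pos (cc := cc) n ((h + r) * sx)
    have hn0 : (0:ℝ) ≤ 1 / (n:ℝ) := by positivity
    have l1 : Real.log (K1 ^ sx) + Real.log (cc.Tsum n ((h + r) * sx)) ≤ Real.log (S n) := by
      rw [← Real.log_mul (by positivity) (ne_of_gt hTpos)]
      exact Real.log_le_log (by positivity) (hsum n hn).1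
    have l2 : Real.log (S n) ≤ Real.log (K2 ^ sx) + Real.log (cc.Tsum n ((h + r) * sx)) := by
      rw [← Real.log_mul (by positivity) (ne_of_gt hTpos)]
      exact Real.log_le_log (hSpos n hn) (hsum n hn).2
    constructor
    · calc _ = (1 / (n:ℝ)) * (Real.log (K1 ^ sx) + Real.log (cc.Tsum n ((h + r) * sx))) := by ring
        _ ≤ _ := mul_le_mul_of_nonneg_left l1 hn0
    · calc (1 / (n:ℝ)) * Real.log (S n)
          ≤ (1 / (n:ℝ)) * (Real.log (K2 ^ sx) + Real.log (cc.Tsum n ((h + r) * sx))) :=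
            mul_le_mul_of_nonneg_left l2 hn0
        _ = _ := by ring
  have hconst : ∀ C : ℝ, Filter.Tendsto (fun n : ℕ => (1 / (n:ℝ)) * C) Filter.atTop (nhds 0) := by
    intro C
    have h1 := tendsto_const_div_atTop_nhds_zero_nat C
    refine h1.congr (fun n => ?_)
    rw [one_div_mul_eq_div]
  have hLo : Filter.Tendsto (fun n : ℕ => (1 / (n:ℝ)) * Real.log (K1 ^ sx) +
      (1 / (n:ℝ)) * Real.log (cc.Tsum n ((h + r) * sx))) Filter.atTop
      (nhds (0 + Q ((h + r) * sx))) := (hconst _).add (hQ _)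
  have hHi : Filter.Tendsto (fun n : ℕ => (1 / (n:ℝ)) * Real.log (K2 ^ sx) +
      (1 / (n:ℝ)) * Real.log (cc.Tsum n ((h + r) * sx))) Filter.atTop
      (nhds (0 + Q ((h + r) * sx))) := (hconst _).add (hQ _)
  rw [zero_add] at hLo hHi
  exact tendsto_of_tendsto_of_tendsto_of_le_of_le' hLo hHi
    (Filter.eventually_atTop.2 ⟨1, fun n hn => (hlog n hn).1⟩)
    (Filter.eventually_atTop.2 ⟨1, fun n hn => (hlog n hn).2⟩)


lemma Q_strict_anti (Q : ℝ → ℝ)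
    (hQ : ∀ t : ℝ, Filter.Tendsto
      (fun k : ℕ => (1 / (k : ℝ)) * Real.log (cc.Tsum k t)) Filter.atTop (nhds (Q t)))
    {t δ : ℝ} (hδ : 0 < δ) : Q (t + δ) ≤ Q t - δ * Real.log cc.b := by
  have hlogb : 0 < Real.log cc.b := Real.log_pos cc.hb1
  have key : ∀ n : ℕ, 1 ≤ n →
      (1 / (n:ℝ)) * Real.log (cc.Tsum n (t + δ)) ≤
        -(δ * Real.log cc.b) + (1 / (n:ℝ)) * Real.log (cc.Tsum n t) := by
    intro n hn
    have hn0 : ((n:ℝ)) ≠ 0 := by positivity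
    have hsum : cc.Tsum n (t + δ) ≤ (cc.b⁻¹ ^ n) ^ δ * cc.Tsum n t := by
      rw [Tsum, Tsum, Finset.mul_sum]
      apply Finset.sum_le_sum
      intro σ _
      set p := cc.φnorm (List.ofFn σ) with hp
      have hppos : 0 < p := φnorm_pos _
      have h1 : p ^ (t + δ) = p ^ t * p ^ δ := Real.rpow_add hppos t δ
      have h2 : p ^ δ ≤ (cc.b⁻¹ ^ n) ^ δ := by
        apply Real.rpow_le_rpow hppos.le _ hδ.le
        have := φnorm_le (cc := cc) (List.ofFn σ)
        rwa [List.length_ofFn] at this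
      calc p ^ (t + δ) = p ^ t * p ^ δ := h1
        _ ≤ p ^ t * (cc.b⁻¹ ^ n) ^ δ :=
            mul_le_mul_of_nonneg_left h2 (Real.rpow_pos_of_pos hppos t).le
        _ = (cc.b⁻¹ ^ n) ^ δ * p ^ t := mul_comm _ _
    have hb'pos : (0:ℝ) < cc.b⁻¹ ^ n := pow_pos (inv_pos.2 bpos) n
    have hlog : Real.log (cc.Tsum n (t + δ)) ≤
        δ * ((n:ℝ) * Real.log cc.b⁻¹) + Real.log (cc.Tsum n t) := by
      calc Real.log (cc.Tsum n (t + δ))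
          ≤ Real.log ((cc.b⁻¹ ^ n) ^ δ * cc.Tsum n t) :=
            Real.log_le_log (Tsum_pos n _) hsum
        _ = Real.log ((cc.b⁻¹ ^ n) ^ δ) + Real.log (cc.Tsum n t) :=
            Real.log_mul (ne_of_gt (Real.rpow_pos_of_pos hb'pos δ)) (ne_of_gt (Tsum_pos n t))
        _ = δ * ((n:ℝ) * Real.log cc.b⁻¹) + Real.log (cc.Tsum n t) := by
            rw [Real.log_rpow hb'pos, Real.log_pow]
    have hml := mul_le_mul_of_nonneg_left hlog (by positivity : (0:ℝ) ≤ 1 / (n:ℝ))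
    calc (1 / (n:ℝ)) * Real.log (cc.Tsum n (t + δ))
        ≤ (1 / (n:ℝ)) * (δ * ((n:ℝ) * Real.log cc.b⁻¹) + Real.log (cc.Tsum n t)) := hml
      _ = -(δ * Real.log cc.b) + (1 / (n:ℝ)) * Real.log (cc.Tsum n t) := by
          rw [Real.log_inv]
          field_simp
  have hRHS : Filter.Tendsto
      (fun n : ℕ => -(δ * Real.log cc.b) + (1 / (n:ℝ)) * Real.log (cc.Tsum n t))
      Filter.atTop (nhds (-(δ * Real.log cc.b) + Q t)) := tendsto_const_nhds.add (hQ t)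
  have := le_of_tendsto_of_tendsto (hQ (t + δ)) hRHS
    (Filter.eventually_atTop.2 ⟨1, fun n hn => key n hn⟩)
  linarith


end CookieCutter

/-- The `n`-th quantization error of order `r`. -/
def Vnr (μ : Measure ℝ) (n : ℕ) (r : ℝ) : ℝ :=
  sInf ((fun α : Finset ℝ => ∫ x, Metric.infDist x (α : Set ℝ) ^ r ∂μ) ''
    {α : Finset ℝ | α.Nonempty ∧ α.card ≤ n})

/-- The auxiliary quantization error `u_{n,r}` with `U = (0,1)`. -/
def unr (μ : Measure ℝ) (n : ℕ) (r : ℝ) : ℝ :=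
  sInf ((fun α : Finset ℝ =>
      ∫ x, Metric.infDist x ((α : Set ℝ) ∪ (Set.Ioo (0:ℝ) 1)ᶜ) ^ r ∂μ) ''
    {α : Finset ℝ | α.card ≤ n})


theorem kappa_exists_unique (cc : CookieCutter) (Q : ℝ → ℝ)
    (hQ : ∀ t : ℝ, Filter.Tendsto
      (fun k : ℕ => (1 / (k : ℝ)) * Real.log
        (∑ σ : Fin k → Fin cc.N, cc.φnorm (List.ofFn σ) ^ t))
      Filter.atTop (nhds (Q t)))
    (h : ℝ) (hh0 : 0 < h) (hQh : Q h = 0)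
    (μ : MeasureTheory.Measure ℝ) (hμ : cc.IsGibbsLike μ h) (r : ℝ) (hr : 0 < r) :
    ∃! κ : ℝ, 0 < κ ∧ Filter.Tendsto
      (fun n : ℕ => (1 / (n : ℝ)) * Real.log
        (∑ σ : Fin n → Fin cc.N,
          ((μ (cc.Jc (List.ofFn σ))).toReal * cc.φnorm (List.ofFn σ) ^ r) ^ (κ / (r + κ))))
      Filter.atTop (nhds 0) := by
  have hQ' : ∀ t : ℝ, Filter.Tendsto
      (fun k : ℕ => (1 / (k : ℝ)) * Real.log (cc.Tsum k t))
      Filter.atTop (nhds (Q t)) := hQ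
  have hrh : 0 < r + h := by linarith
  refine ⟨h, ⟨hh0, ?_⟩, ?_⟩
  · have hs : 0 < h / (r + h) := div_pos hh0 hrh
    have hT := CookieCutter.tendsto_weighted (cc := cc) Q hQ' hh0 hr hs hμ
    have heq : (h + r) * (h / (r + h)) = h := by
      rw [← mul_div_assoc, div_eq_iff (ne_of_gt hrh)]; ring
    rw [heq, hQh] at hT
    exact hT
  · rintro κ' ⟨hκ', hlim⟩
    have hrκ : 0 < r + κ' := by linarith
    have hs' : 0 < κ' / (r + κ') := div_pos hκ' hrκ
    have hT' := CookieCutter.tendsto_weighted (cc := cc) Q hQ' hh0 hr hs' hμ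
    have hQ0 : Q ((h + r) * (κ' / (r + κ'))) = 0 := tendsto_nhds_unique hT' hlim
    set t' := (h + r) * (κ' / (r + κ')) with ht'
    have hlogb : 0 < Real.log cc.b := Real.log_pos cc.hb1
    have ht'h : t' = h := by
      rcases lt_trichotomy t' h with hlt | heq | hgt
      · have hmono := CookieCutter.Q_strict_anti (cc := cc) Q hQ' (t := t') (δ := h - t')
          (by linarith)
        rw [show t' + (h - t') = h by ring, hQh, hQ0] at hmono
        nlinarith
      · exact heq
      · have hmono := CookieCutter.Q_strict_anti (cc := cc) Q hQ' (t := h) (δ := t' - h)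
          (by linarith)
        rw [show h + (t' - h) = t' by ring, hQh, hQ0] at hmono
        nlinarith
    have hmul : (h + r) * κ' = h * (r + κ') := by
      have h3 : (h + r) * (κ' / (r + κ')) = h := ht'h
      rw [← mul_div_assoc, div_eq_iff (ne_of_gt hrκ)] at h3
      exact h3
    have h2 : r * κ' = r * h := by linear_combination hmul
    exact mul_left_cancel₀ (ne_of_gt hr) h2
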